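/- arXiv:2411.16716 — 4 statements merged into one kernel-verified Lean document; each statement's English description precedes it below -/
import Mathlib

section
/- Let H be a complex Hilbert space and let D, τ be bounded self-adjoint operators on H with τ² = 1 and Dτ + τD = 0. Set g(x) = x/√(1+x²) and h(x) = 1/√(1+x²). Then (D − τ)·((D − τ)²)^{−1/2} = g(D) − τ h(D), where ((D − τ)²)^{−1/2} and g(D), h(D) are defined by the continuous functional calculus; that is, the phase of D − τ equals G := g(D) − τ h(D). -/
/-- For a symmetry `τ` anticommuting with the self-adjoint `D`, the phase of `D - τ`,
i.e. `(D - τ)·((D - τ)²)^(-1/2)`, equals `g(D) - τ h(D)` where `g(x) = x/√(1+x²)` and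
`h(x) = 1/√(1+x²)`. -/
theorem stmt_3 {H : Type*} [NormedAddCommGroup H] [InnerProductSpace ℂ H] [CompleteSpace H]
    (D τ : H →L[ℂ] H) (hD : IsSelfAdjoint D) (hτ : IsSelfAdjoint τ)
    (hτ2 : τ * τ = 1) (hanti : D * τ + τ * D = 0) :
    (D - τ) * cfc (fun x : ℝ => (Real.sqrt x)⁻¹) ((D - τ) ^ 2) =
      cfc (fun x : ℝ => x / Real.sqrt (1 + x ^ 2)) D -
        τ * cfc (fun x : ℝ => 1 / Real.sqrt (1 + x ^ 2)) D := by
  have hsq : (D - τ) ^ 2 = D ^ 2 + 1 := by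
    have h1 : (D - τ) ^ 2 = D ^ 2 - (D * τ + τ * D) + τ * τ := by noncomm_ring
    rw [h1, hanti, hτ2]; abel
  have hcont : Continuous (fun x : ℝ => (Real.sqrt (1 + x ^ 2))⁻¹) := by
    apply Continuous.inv₀ (by fun_prop)
    intro x
    have : (0:ℝ) < 1 + x ^ 2 := by positivity
    exact (Real.sqrt_pos.mpr this).ne'
  have hD2 : D ^ 2 + 1 = cfc (fun x : ℝ => 1 + x ^ 2) D := by
    rw [cfc_const_add _ _ _ (by fun_prop) hD, cfc_pow_id _ _ hD, map_one]
    abel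
  have key : cfc (fun x : ℝ => (Real.sqrt x)⁻¹) ((D - τ) ^ 2)
      = cfc (fun x : ℝ => (Real.sqrt (1 + x ^ 2))⁻¹) D := by
    rw [hsq, hD2, ← cfc_comp' (fun x : ℝ => (Real.sqrt x)⁻¹) (fun x : ℝ => 1 + x ^ 2) D ?_
      (by fun_prop) hD]
    · apply ContinuousOn.mono (s := {x : ℝ | 0 < x})
      · exact ContinuousOn.inv₀ Real.continuous_sqrt.continuousOn
          (fun x hx => (Real.sqrt_pos.mpr hx).ne')
      · rintro y ⟨x, -, rfl⟩
        show (0:ℝ) < 1 + x ^ 2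
        positivity
  rw [key, sub_mul]
  have hDmul : D * cfc (fun x : ℝ => (Real.sqrt (1 + x ^ 2))⁻¹) D
      = cfc (fun x : ℝ => x / Real.sqrt (1 + x ^ 2)) D := by
    have hm := cfc_mul (id : ℝ → ℝ) (fun x : ℝ => (Real.sqrt (1 + x ^ 2))⁻¹) D
      continuousOn_id hcont.continuousOn
    rw [cfc_id ℝ D hD] at hm
    rw [← hm]
    exact cfc_congr fun x _ => (div_eq_mul_inv _ _).symm
  have hone : cfc (fun x : ℝ => (Real.sqrt (1 + x ^ 2))⁻¹) D
      = cfc (fun x : ℝ => 1 / Real.sqrt (1 + x ^ 2)) D :=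
    cfc_congr fun x _ => (one_div _).symm
  rw [hDmul, hone]
end

section
/- Let H be a complex Hilbert space and let D, τ be bounded self-adjoint operators on H with τ² = 1 and Dτ + τD = 0. Set g(x) = x/√(1+x²) and h(x) = 1/√(1+x²), and G := g(D) − τ h(D). Then G is a self-adjoint unitary: G* = G and G² = 1. -/
/-!
Conjugation by the symmetry `τ` is a continuous `⋆`-automorphism, so it commutes with the
continuous functional calculus; since it sends `D` to `-D`, it fixes `h(D)` (`h` is even) and
negates `g(D)` (`g` is odd). Hence `τ` commutes with `h(D)` and anticommutes with `g(D)`, and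
expanding `(g(D) - τ h(D))²` leaves `g(D)² + h(D)² = (g² + h²)(D) = 1`.
-/

lemma mul_eq_mul_of_mul_mul_eq {M : Type*} [Monoid M] {τ c d : M} (hτ2 : τ * τ = 1)
    (h : τ * c * τ = d) : τ * c = d * τ := by
  rw [← h, mul_assoc _ τ τ, hτ2, mul_one]

section FunctionalCalculus

variable {A : Type*} [Ring A] [StarRing A] [TopologicalSpace A] [Algebra ℝ A]
  [ContinuousFunctionalCalculus ℝ A IsSelfAdjoint]

lemma cfc_mul_self_add_cfc_mul_self {f g : ℝ → ℝ} (hf : Continuous f) (hg : Continuous g)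
    (hfg : ∀ x, f x * f x + g x * g x = 1) {a : A} (ha : IsSelfAdjoint a) :
    cfc f a * cfc f a + cfc g a * cfc g a = 1 := by
  rw [← cfc_mul f f a, ← cfc_mul g g a, ← cfc_add a (fun x => f x * f x) (fun x => g x * g x),
    ← cfc_one ℝ a]
  exact cfc_congr fun x _ => hfg x

variable [ContinuousMul A] [ContinuousMap.UniqueHom ℝ A]

lemma mul_cfc_mul_eq_cfc_comp_neg {τ a : A} (hτ : IsSelfAdjoint τ) (hτ2 : τ * τ = 1)
    (ha : IsSelfAdjoint a) (hanti : a * τ + τ * a = 0) (f : ℝ → ℝ) (hf : Continuous f) :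
    τ * cfc f a * τ = cfc (fun x => f (-x)) a := by
  let u : unitary A :=
    ⟨τ, Unitary.mem_iff.2 ⟨by rw [hτ.star_eq, hτ2], by rw [hτ.star_eq, hτ2]⟩⟩
  have hconj : ∀ x, Unitary.conjStarAlgAut ℝ A u x = τ * x * τ := fun x => by
    simp [u, hτ.star_eq]
  have hneg : τ * a * τ = -a := by
    rw [mul_assoc, eq_neg_of_add_eq_zero_left hanti, mul_neg, ← mul_assoc, hτ2, one_mul]
  calc τ * cfc f a * τ = Unitary.conjStarAlgAut ℝ A u (cfc f a) := (hconj _).symm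
    _ = cfc f (-a) := by
      rw [StarAlgHomClass.map_cfc (S := ℝ) _ f a hf.continuousOn
        (by simp only [funext hconj]; fun_prop), hconj, hneg]
    _ = cfc (fun x => f (-x)) a := (cfc_comp_neg f a).symm

lemma commute_cfc_of_anticommute_of_even {τ a : A} (hτ : IsSelfAdjoint τ) (hτ2 : τ * τ = 1)
    (ha : IsSelfAdjoint a) (hanti : a * τ + τ * a = 0) {f : ℝ → ℝ} (hf : Continuous f)
    (heven : Function.Even f) : Commute τ (cfc f a) :=
  mul_eq_mul_of_mul_mul_eq hτ2 <| by
    rw [mul_cfc_mul_eq_cfc_comp_neg hτ hτ2 ha hanti f hf]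
    exact cfc_congr fun x _ => heven x

lemma cfc_mul_add_mul_cfc_eq_zero_of_odd {τ a : A} (hτ : IsSelfAdjoint τ) (hτ2 : τ * τ = 1)
    (ha : IsSelfAdjoint a) (hanti : a * τ + τ * a = 0) {f : ℝ → ℝ} (hf : Continuous f)
    (hodd : Function.Odd f) : cfc f a * τ + τ * cfc f a = 0 := by
  have h : τ * cfc f a * τ = -cfc f a := by
    rw [mul_cfc_mul_eq_cfc_comp_neg hτ hτ2 ha hanti f hf, ← cfc_neg]
    exact cfc_congr fun x _ => hodd x
  rw [mul_eq_mul_of_mul_mul_eq hτ2 h, neg_mul, add_neg_cancel]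

end FunctionalCalculus

lemma sub_mul_sq_eq_one {R : Type*} [Ring R] {τ a b : R} (hτ2 : τ * τ = 1)
    (hanti : a * τ + τ * a = 0) (hτb : Commute τ b) (hab : Commute a b)
    (hsq : a * a + b * b = 1) : (a - τ * b) ^ 2 = 1 := by
  calc (a - τ * b) ^ 2 = a * a + τ * τ * (b * b) - (a * τ + τ * a) * b + τ * (a * b - b * a)
        - τ * (τ * b - b * τ) * b := by noncomm_ring
    _ = 1 := by rw [hτ2, one_mul, hsq, hanti, hab.eq, hτb.eq]; noncomm_ring

lemma continuous_div_sqrt_one_add_sq : Continuous fun x : ℝ => x / √(1 + x ^ 2) :=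
  continuous_id.div (by fun_prop) fun x => by positivity

lemma continuous_one_div_sqrt_one_add_sq : Continuous fun x : ℝ => 1 / √(1 + x ^ 2) :=
  continuous_const.div (by fun_prop) fun x => by positivity

lemma div_sqrt_one_add_sq_mul_self_add (x : ℝ) :
    x / √(1 + x ^ 2) * (x / √(1 + x ^ 2)) + 1 / √(1 + x ^ 2) * (1 / √(1 + x ^ 2)) = 1 := by
  rw [div_mul_div_comm, div_mul_div_comm, ← add_div, Real.mul_self_sqrt (by positivity),
    div_eq_one_iff_eq (by positivity)]
  ring

/-- For a symmetry `τ` anticommuting with the self-adjoint `D`, the operator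
`G = g(D) - τ h(D)` (with `g(x) = x/√(1+x²)`, `h(x) = 1/√(1+x²)`) is a self-adjoint
unitary: `G* = G` and `G² = 1`. -/
theorem stmt_4 {H : Type*} [NormedAddCommGroup H] [InnerProductSpace ℂ H] [CompleteSpace H]
    (D τ : H →L[ℂ] H) (hD : IsSelfAdjoint D) (hτ : IsSelfAdjoint τ)
    (hτ2 : τ * τ = 1) (hanti : D * τ + τ * D = 0)
    (G : H →L[ℂ] H)
    (hG : G = cfc (fun x : ℝ => x / Real.sqrt (1 + x ^ 2)) D -
      τ * cfc (fun x : ℝ => 1 / Real.sqrt (1 + x ^ 2)) D) :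
    star G = G ∧ G ^ 2 = 1 := by
  have hτb : Commute τ (cfc (fun x : ℝ => 1 / √(1 + x ^ 2)) D) :=
    commute_cfc_of_anticommute_of_even hτ hτ2 hD hanti continuous_one_div_sqrt_one_add_sq
      fun x => by simp
  have hτa := cfc_mul_add_mul_cfc_eq_zero_of_odd hτ hτ2 hD hanti
    continuous_div_sqrt_one_add_sq fun x => by simp [neg_div]
  have hsq := cfc_mul_self_add_cfc_mul_self continuous_div_sqrt_one_add_sq
    continuous_one_div_sqrt_one_add_sq div_sqrt_one_add_sq_mul_self_add hD
  subst hG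
  exact ⟨(IsSelfAdjoint.cfc.sub ((hτ.commute_iff IsSelfAdjoint.cfc).1 hτb)).star_eq,
    sub_mul_sq_eq_one hτ2 hτa hτb (cfc_commute_cfc _ _ D) hsq⟩
end

section
/- Let H be a complex Hilbert space and let D, τ be bounded self-adjoint operators on H with τ² = 1 and Dτ + τD = 0. Set g(x) = x/√(1+x²), h(x) = 1/√(1+x²), and G := g(D) − τ h(D). Then −τ G τ = g(D) + τ h(D) = (D + τ)·((D + τ)²)^{−1/2}; that is, conjugating the phase of D − τ by τ and changing sign yields the phase of D + τ. -/
/-- For a symmetry `τ` anticommuting with the self-adjoint `D` and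
`G = g(D) - τ h(D)` (with `g(x) = x/√(1+x²)`, `h(x) = 1/√(1+x²)`), one has
`-τGτ = g(D) + τ h(D) = (D + τ)·((D + τ)²)^(-1/2)`: conjugating the phase of `D - τ` by
`τ` and changing sign yields the phase of `D + τ`. -/
theorem stmt_7 {H : Type*} [NormedAddCommGroup H] [InnerProductSpace ℂ H] [CompleteSpace H]
    (D τ : H →L[ℂ] H) (hD : IsSelfAdjoint D) (hτ : IsSelfAdjoint τ)
    (hτ2 : τ * τ = 1) (hanti : D * τ + τ * D = 0)
    (G : H →L[ℂ] H)
    (hG : G = cfc (fun x : ℝ => x / Real.sqrt (1 + x ^ 2)) D -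
      τ * cfc (fun x : ℝ => 1 / Real.sqrt (1 + x ^ 2)) D) :
    -(τ * G * τ) = cfc (fun x : ℝ => x / Real.sqrt (1 + x ^ 2)) D +
        τ * cfc (fun x : ℝ => 1 / Real.sqrt (1 + x ^ 2)) D ∧
      -(τ * G * τ) = (D + τ) * cfc (fun x : ℝ => (Real.sqrt x)⁻¹) ((D + τ) ^ 2) := by
  set g : ℝ → ℝ := fun x : ℝ => x / Real.sqrt (1 + x ^ 2) with hg
  set h : ℝ → ℝ := fun x : ℝ => 1 / Real.sqrt (1 + x ^ 2) with hh
  have hsqrt_pos : ∀ x : ℝ, 0 < Real.sqrt (1 + x ^ 2) := fun x =>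
    Real.sqrt_pos.2 (by positivity)
  have hgc : Continuous g := by
    exact continuous_id.div (by fun_prop) (fun x => (hsqrt_pos x).ne')
  have hhc : Continuous h := by
    exact continuous_const.div (by fun_prop) (fun x => (hsqrt_pos x).ne')
  -- the conjugation star algebra homomorphism
  let φ : (H →L[ℂ] H) →⋆ₐ[ℂ] (H →L[ℂ] H) :=
    { toFun := fun x => τ * x * τ
      map_one' := by simpa using hτ2
      map_mul' := fun x y => by
        calc τ * (x * y) * τ = (τ * x) * (τ * τ) * (y * τ) := by rw [hτ2]; noncomm_ring
        _ = (τ * x * τ) * (τ * y * τ) := by noncomm_ring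
      map_zero' := by simp
      map_add' := fun x y => by noncomm_ring
      commutes' := fun c => by
        simp only [Algebra.algebraMap_eq_smul_one]
        rw [mul_smul_comm, smul_mul_assoc, mul_one, hτ2]
      map_star' := fun x => by
        simp only [star_mul, hτ.star_eq, mul_assoc] }
  have hφcont : Continuous φ := by
    show Continuous fun x : H →L[ℂ] H => τ * x * τ
    exact (continuous_const.mul continuous_id).mul continuous_const
  have hτD : τ * D = -(D * τ) := by
    have := hanti
    linear_combination (norm := noncomm_ring) this
  have hφD : φ D = -D := by
    show τ * D * τ = -D
    rw [hτD]
    calc -(D * τ) * τ = -(D * (τ * τ)) := by noncomm_ring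
    _ = -D := by rw [hτ2]; simp
  -- conjugation of cfc
  have hconj : ∀ f : ℝ → ℝ, Continuous f → τ * cfc f D * τ = cfc (fun x => f (-x)) D := by
    intro f hf
    have h1 : φ (cfc f D) = cfc f (φ D) :=
      StarAlgHomClass.map_cfc φ f D hf.continuousOn hφcont hD (by rw [hφD]; exact hD.neg)
    have h2 : cfc f (-D) = cfc (fun x => f (-x)) D :=
      (cfc_comp_neg (f := f) (a := D) hf.continuousOn hD).symm
    show φ (cfc f D) = _
    rw [h1, hφD, h2]
  have hheven : (fun x : ℝ => h (-x)) = h := by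
    funext x; simp [hh, neg_pow]
  have hgodd : (fun x : ℝ => g (-x)) = fun x => -g x := by
    funext x; simp [hg, neg_pow, neg_div]
  have hconjh : τ * cfc h D * τ = cfc h D := by rw [hconj h hhc, hheven]
  have hconjg : τ * cfc g D * τ = -cfc g D := by
    rw [hconj g hgc, hgodd, cfc_neg]
  -- part 1
  have part1 : -(τ * G * τ) = cfc g D + τ * cfc h D := by
    rw [hG]
    have expand : τ * (cfc g D - τ * cfc h D) * τ
        = τ * cfc g D * τ - (τ * τ) * (cfc h D * τ) := by noncomm_ring
    rw [expand, hτ2, hconjg, one_mul]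
    have hcomm : cfc h D * τ = τ * cfc h D := by
      have := hconjh
      calc cfc h D * τ = (τ * τ) * (cfc h D * τ) := by rw [hτ2]; noncomm_ring
      _ = τ * (τ * cfc h D * τ) := by noncomm_ring
      _ = τ * cfc h D := by rw [this]
    rw [hcomm]
    noncomm_ring
  refine ⟨part1, ?_⟩
  rw [part1]
  -- part 2
  have hsq : (D + τ) ^ 2 = cfc (fun x : ℝ => x ^ 2 + 1) D := by
    have e1 : cfc (fun x : ℝ => x ^ 2 + 1) D = D ^ 2 + 1 := by
      rw [cfc_add D (fun x : ℝ => x ^ 2) (fun _ : ℝ => 1) (by fun_prop)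
        (by fun_prop), cfc_pow_id (a := D), cfc_const_one ℝ D]
    rw [e1]
    have : (D + τ) ^ 2 = D ^ 2 + (D * τ + τ * D) + τ * τ := by noncomm_ring
    rw [this, hanti, hτ2]; noncomm_ring
  have himg : ∀ y ∈ (fun x : ℝ => x ^ 2 + 1) '' spectrum ℝ D, Real.sqrt y ≠ 0 := by
    rintro y ⟨x, -, rfl⟩
    exact (Real.sqrt_pos.2 (by positivity)).ne'
  have hcont2 : ContinuousOn (fun x : ℝ => (Real.sqrt x)⁻¹)
      ((fun x : ℝ => x ^ 2 + 1) '' spectrum ℝ D) :=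
    (Real.continuous_sqrt.continuousOn).inv₀ himg
  have hcomp : cfc (fun x : ℝ => (Real.sqrt x)⁻¹) ((D + τ) ^ 2) = cfc h D := by
    rw [hsq, ← cfc_comp' (fun x : ℝ => (Real.sqrt x)⁻¹) (fun x : ℝ => x ^ 2 + 1) D hcont2
      (by fun_prop)]
    congr 1
    funext x
    simp [hh, one_div, add_comm]
  rw [hcomp]
  have hDh : cfc g D = D * cfc h D := by
    calc cfc g D = cfc (fun x : ℝ => x * h x) D := by
          congr 1; funext x; simp [hg, hh, div_eq_mul_inv]
      _ = cfc (fun x : ℝ => x) D * cfc h D :=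
          cfc_mul _ _ D (by fun_prop) hhc.continuousOn
      _ = D * cfc h D := by rw [cfc_id' ℝ D]
  rw [add_mul, ← hDh]
end

section
/- Let H be a complex Hilbert space and let D, τ be bounded self-adjoint operators on H with τ² = 1 and Dτ + τD = 0. For an invertible self-adjoint bounded operator T let P₊(T) := (1 + T·(T²)^{−1/2})/2. Then P₊(D + τ) − P₊(D − τ) = τ·(1 + D²)^{−1/2}. -/
/-- The positive spectral projection `P₊(T) = (1 + T·(T²)^(-1/2))/2` of an invertible
self-adjoint bounded operator `T`, with `(T²)^(-1/2)` given by continuous functional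
calculus. -/
noncomputable def Pplus {H : Type*} [NormedAddCommGroup H] [InnerProductSpace ℂ H]
    [CompleteSpace H] (T : H →L[ℂ] H) : H →L[ℂ] H :=
  (2 : ℂ)⁻¹ • (1 + T * cfc (fun x : ℝ => (Real.sqrt x)⁻¹) (T ^ 2))

/-- For a symmetry `τ` anticommuting with the self-adjoint `D`,
`P₊(D + τ) - P₊(D - τ) = τ·(1 + D²)^(-1/2)`. -/
theorem stmt_8 {H : Type*} [NormedAddCommGroup H] [InnerProductSpace ℂ H] [CompleteSpace H]
    (D τ : H →L[ℂ] H) (hD : IsSelfAdjoint D) (hτ : IsSelfAdjoint τ)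
    (hτ2 : τ * τ = 1) (hanti : D * τ + τ * D = 0) :
    Pplus (D + τ) - Pplus (D - τ) = τ * cfc (fun x : ℝ => (Real.sqrt x)⁻¹) (1 + D ^ 2) := by
  have h1 : (D + τ) ^ 2 = 1 + D ^ 2 := by
    have : (D + τ) ^ 2 = D ^ 2 + (D * τ + τ * D) + τ * τ := by noncomm_ring
    rw [this, hanti, hτ2]; noncomm_ring
  have h2 : (D - τ) ^ 2 = 1 + D ^ 2 := by
    have : (D - τ) ^ 2 = D ^ 2 - (D * τ + τ * D) + τ * τ := by noncomm_ring
    rw [this, hanti, hτ2]; noncomm_ring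
  set S := cfc (fun x : ℝ => (Real.sqrt x)⁻¹) (1 + D ^ 2) with hS
  have : Pplus (D + τ) - Pplus (D - τ)
      = (2 : ℂ)⁻¹ • (1 + (D + τ) * S) - (2 : ℂ)⁻¹ • (1 + (D - τ) * S) := by
    rw [Pplus, Pplus, h1, h2]
  rw [this, ← smul_sub]
  have : (1 + (D + τ) * S) - (1 + (D - τ) * S) = (2 : ℂ) • (τ * S) := by
    rw [two_smul]; noncomm_ring
  rw [this, smul_smul, inv_mul_cancel₀ (by norm_num : (2:ℂ) ≠ 0), one_smul]
end
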